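/- For every integer n ≥ 1, the grid vertex 2^{-n}(1,1,1) is the unique panchromatic grid vertex of the basic coloring f₀ⁿ: it is adjacent to cubelets of all four colors 0, 1, 2, 3 under f₀ⁿ, and no other grid vertex has this property. -/

import Mathlib

/-- A cubelet index i is adjacent to a grid coordinate a (both along one axis)
iff the grid coordinate is one of the two faces of the cubelet: a = i or a = i + 1.
(The grid vertex 2^{-n}(a,b,c) is a corner of cubelet K_{ijk} iff this holds on each axis.) -/
def AdjIdx (a i : ℕ) : Prop := a = i ∨ a = i + 1

/-- A cubelet K_{ijk} is exterior if some index equals 0 or 2^n − 1. -/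
def ExteriorCubelet (n : ℕ) (i j k : Fin (2 ^ n)) : Prop :=
  i.val = 0 ∨ j.val = 0 ∨ k.val = 0 ∨
    i.val = 2 ^ n - 1 ∨ j.val = 2 ^ n - 1 ∨ k.val = 2 ^ n - 1

/-- The bmf boundary conditions on a coloring f. -/
def BMFBoundary (n : ℕ) (f : Fin (2 ^ n) → Fin (2 ^ n) → Fin (2 ^ n) → Fin 4) : Prop :=
  ∀ i j k : Fin (2 ^ n),
    (i.val = 0 → f i j k = 1) ∧
    (j.val = 0 → 0 < i.val → f i j k = 2) ∧
    (k.val = 0 → 0 < i.val → 0 < j.val → f i j k = 3) ∧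
    (ExteriorCubelet n i j k → 0 < i.val → 0 < j.val → 0 < k.val → f i j k = 0)

/-- The grid vertex 2^{-n}(a,b,c) has a cubelet of color `col` adjacent to it. -/
def HasColorAt (n : ℕ) (f : Fin (2 ^ n) → Fin (2 ^ n) → Fin (2 ^ n) → Fin 4)
    (a b c : ℕ) (col : Fin 4) : Prop :=
  ∃ i j k : Fin (2 ^ n), AdjIdx a i.val ∧ AdjIdx b j.val ∧ AdjIdx c k.val ∧ f i j k = col
/-- The basic coloring f₀ⁿ: colors forced by the bmf boundary conditions, 0 elsewhere. -/
def basicColoring (n : ℕ) : Fin (2 ^ n) → Fin (2 ^ n) → Fin (2 ^ n) → Fin 4 :=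
  fun i j k =>
    if i.val = 0 then 1
    else if j.val = 0 then 2
    else if k.val = 0 then 3
    else 0

/-- A grid vertex 2^{-n}(a,b,c) is panchromatic under f if every one of the four colors
appears on some adjacent cubelet. -/
def Panchromatic (n : ℕ) (f : Fin (2 ^ n) → Fin (2 ^ n) → Fin (2 ^ n) → Fin 4)
    (a b c : ℕ) : Prop :=
  ∀ col : Fin 4, HasColorAt n f a b c col


/-!
A cubelet of color 1, 2 or 3 under f₀ⁿ lies in the layer i = 0, j = 0 or k = 0 respectively,
so a vertex seeing all three has every coordinate at most 1; a cubelet of color 0 has all indices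
positive, so a vertex seeing it has every coordinate at least 1. Conversely the four cubelets
(1,1,1), (0,1,1), (1,0,1), (1,1,0) around 2^{-n}(1,1,1) carry the four colors once 2^n ≥ 2.
-/

lemma AdjIdx.le {a i : ℕ} (h : AdjIdx a i) : i ≤ a := by
  unfold AdjIdx at h; omega

lemma AdjIdx.le_succ {a i : ℕ} (h : AdjIdx a i) : a ≤ i + 1 := by
  unfold AdjIdx at h; omega

section basicColoring

variable {n : ℕ} {i j k : Fin (2 ^ n)}

lemma basicColoring_eq_one_iff : basicColoring n i j k = 1 ↔ i.val = 0 := by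
  unfold basicColoring; split_ifs <;> simp_all

lemma basicColoring_eq_two_iff : basicColoring n i j k = 2 ↔ i.val ≠ 0 ∧ j.val = 0 := by
  unfold basicColoring; split_ifs <;> simp_all

lemma basicColoring_eq_three_iff :
    basicColoring n i j k = 3 ↔ i.val ≠ 0 ∧ j.val ≠ 0 ∧ k.val = 0 := by
  unfold basicColoring; split_ifs <;> simp_all

lemma basicColoring_eq_zero_iff :
    basicColoring n i j k = 0 ↔ i.val ≠ 0 ∧ j.val ≠ 0 ∧ k.val ≠ 0 := by
  unfold basicColoring; split_ifs <;> simp_all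

end basicColoring

section HasColorAt

variable {n a b c : ℕ}

lemma HasColorAt.basicColoring_one (h : HasColorAt n (basicColoring n) a b c 1) : a ≤ 1 := by
  obtain ⟨i, _, _, ha, -, -, hi⟩ := h
  simpa [basicColoring_eq_one_iff.1 hi] using ha.le_succ

lemma HasColorAt.basicColoring_two (h : HasColorAt n (basicColoring n) a b c 2) : b ≤ 1 := by
  obtain ⟨_, j, _, -, hb, -, hj⟩ := h
  simpa [(basicColoring_eq_two_iff.1 hj).2] using hb.le_succ

lemma HasColorAt.basicColoring_three (h : HasColorAt n (basicColoring n) a b c 3) : c ≤ 1 := by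
  obtain ⟨_, _, k, -, -, hc, hk⟩ := h
  simpa [(basicColoring_eq_three_iff.1 hk).2.2] using hc.le_succ

lemma HasColorAt.basicColoring_zero (h : HasColorAt n (basicColoring n) a b c 0) :
    1 ≤ a ∧ 1 ≤ b ∧ 1 ≤ c := by
  obtain ⟨i, j, k, ha, hb, hc, hijk⟩ := h
  obtain ⟨hi, hj, hk⟩ := basicColoring_eq_zero_iff.1 hijk
  exact ⟨(Nat.pos_of_ne_zero hi).trans_le ha.le, (Nat.pos_of_ne_zero hj).trans_le hb.le,
    (Nat.pos_of_ne_zero hk).trans_le hc.le⟩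

end HasColorAt

lemma panchromatic_basicColoring_one_one_one {n : ℕ} (hn : 1 ≤ n) :
    Panchromatic n (basicColoring n) 1 1 1 := by
  have h1 : 1 < 2 ^ n := Nat.one_lt_two_pow (by omega)
  let zero : Fin (2 ^ n) := ⟨0, by omega⟩
  let one : Fin (2 ^ n) := ⟨1, h1⟩
  have adj_zero : AdjIdx 1 zero.val := Or.inr rfl
  have adj_one : AdjIdx 1 one.val := Or.inl rfl
  intro col
  fin_cases col
  · exact ⟨one, one, one, adj_one, adj_one, adj_one, basicColoring_eq_zero_iff.2 (by simp [one])⟩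
  · exact ⟨zero, one, one, adj_zero, adj_one, adj_one, basicColoring_eq_one_iff.2 rfl⟩
  · exact ⟨one, zero, one, adj_one, adj_zero, adj_one,
      basicColoring_eq_two_iff.2 (by simp [one, zero])⟩
  · exact ⟨one, one, zero, adj_one, adj_one, adj_zero,
      basicColoring_eq_three_iff.2 (by simp [one, zero])⟩

/-- 2^{-n}(1,1,1) is the unique panchromatic grid vertex of the basic
coloring f₀ⁿ. -/
theorem basic_unique_panchromatic (n : ℕ) (hn : 1 ≤ n) :
    Panchromatic n (basicColoring n) 1 1 1 ∧
    ∀ a b c : ℕ, a ≤ 2 ^ n → b ≤ 2 ^ n → c ≤ 2 ^ n →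
      Panchromatic n (basicColoring n) a b c → a = 1 ∧ b = 1 ∧ c = 1 := by
  refine ⟨panchromatic_basicColoring_one_one_one hn, fun a b c _ _ _ h => ?_⟩
  have ha := (h 1).basicColoring_one
  have hb := (h 2).basicColoring_two
  have hc := (h 3).basicColoring_three
  have hpos := (h 0).basicColoring_zero
  omega
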